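/- arXiv:2001.09274 — 5 statements merged into one kernel-verified Lean document; each statement's English description precedes it below -/
import Mathlib

section
/- Let σ₀ ∈ (1/2, 1) and 0 < a < b be fixed, and let a_L : {primes} → ℂ and κ > 0 be such that for every A > 0 one has ∑_{p ≤ x} |a_L(p)|² = κ·Li(x) + O_A(x/(log x)^A). Then for every A > 0, as ρ → ∞, ∑_{aρ ≤ p ≤ bρ} |a_L(p)|²·log p / p^{σ₀} = κ·(ρ^{1−σ₀}/(1−σ₀))·(b^{1−σ₀} − a^{1−σ₀}) + O_A(ρ^{1−σ₀}/(log ρ)^A). -/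
open Filter Real Set Asymptotics Finset

/-- The logarithmic integral `Li(x) = ∫_2^x dt / log t`. -/
noncomputable def Li (x : ℝ) : ℝ := ∫ t in (2 : ℝ)..x, 1 / Real.log t

/-- The finite set of primes `p ≤ x`. -/
noncomputable def primesUpTo (x : ℝ) : Finset ℕ :=
  (Finset.Iic ⌊x⌋₊).filter Nat.Prime

open scoped Classical in
/-- The finite set of primes `p` with `e⁻¹ ρ ≤ p ≤ e ρ`. -/
noncomputable def primesNear (ρ : ℝ) : Finset ℕ :=
  (Finset.Iic ⌊Real.exp 1 * ρ⌋₊).filter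
    (fun p => p.Prime ∧ Real.exp (-1) * ρ ≤ (p : ℝ) ∧ (p : ℝ) ≤ Real.exp 1 * ρ)

open scoped Classical in
/-- The finite set of primes `p` with `a ρ ≤ p ≤ b ρ`. -/
noncomputable def primesIn (a b ρ : ℝ) : Finset ℕ :=
  (Finset.Iic ⌊b * ρ⌋₊).filter
    (fun p => p.Prime ∧ a * ρ ≤ (p : ℝ) ∧ (p : ℝ) ≤ b * ρ)

/-- The weight `w_p = 1 - |log (p/ρ)|`. -/
noncomputable def weight (ρ : ℝ) (p : ℕ) : ℝ := 1 - |Real.log ((p : ℝ) / ρ)|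

/-- The constant `C_{σ₀} = (2 sinh((1-σ₀)/2) / (1-σ₀))²`. -/
noncomputable def Csigma (σ₀ : ℝ) : ℝ := (2 * Real.sinh ((1 - σ₀) / 2) / (1 - σ₀)) ^ 2

/-- The strong Selberg orthonormality condition for a family of coefficient
sequences `a_1, …, a_k` with constants `κ_1, …, κ_k`. -/
def SSOC {k : ℕ} (a : Fin k → ℕ → ℂ) (κ : Fin k → ℝ) : Prop :=
  ∀ i j : Fin k, ∀ A : ℝ, 0 < A →
    (fun x : ℝ => (∑ p ∈ primesUpTo x, a i p * (starRingEnd ℂ) (a j p)) -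
      (if i = j then (κ j : ℂ) * (Li x : ℂ) else 0)) =O[atTop]
    (fun x : ℝ => x / (Real.log x) ^ A)


/-!
Write `E(x) = ∑_{p ≤ x} |a_L(p)|² - κ Li(x)` and `f(t) = log t / t^σ₀`, and let `m = ⌈aρ⌉ - 1`.
Abel summation over `(m, bρ]`, together with integration by parts against the main term
`κ ∫ f dLi = κ ∫ t^(-σ₀) dt`, turns the sum minus `κ ((bρ)^(1-σ₀) - m^(1-σ₀)) / (1-σ₀)` into
`f(bρ) E(bρ) - f(m) E(m) - ∫_m^{bρ} f' E`. The hypothesis with exponent `A + 1` gives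
`f E = O(t^(1-σ₀) / log^A t)` and `f' E = O(t^(-σ₀) / log^A t)`; for `t` in the window
`[aρ/2, bρ]` these bounds are uniformly `O(ρ^(1-σ₀) / log^A ρ)` and `O(ρ^(-σ₀) / log^A ρ)`, the
latter integrated over an interval of length `O(ρ)`. Replacing `m` by `aρ` in the main term costs
only `O(1)`, since `0 ≤ aρ - m < 1` and `1 - σ₀ ∈ (0, 1)`.
-/
open MeasureTheory intervalIntegral

lemma rpow_div_log_rpow_le_of_mem_Icc {s A c₁ c₂ : ℝ} (hA : 0 ≤ A) (hc₁ : 0 < c₁) :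
    ∀ᶠ ρ in atTop, ∀ t ∈ Icc (c₁ * ρ) (c₂ * ρ),
      t ^ s / log t ^ A ≤ max (c₁ ^ s) (c₂ ^ s) * 2 ^ A * (ρ ^ s / log ρ ^ A) := by
  filter_upwards [eventually_gt_atTop 0, tendsto_log_atTop.eventually_gt_atTop 0,
    tendsto_log_atTop.eventually_ge_atTop (-2 * log c₁)] with ρ hρ hlogρ hlogρ' t ht
  have ht₀ : 0 < t := (mul_pos hc₁ hρ).trans_le ht.1
  have hratio : (t / ρ) ^ s ≤ max (c₁ ^ s) (c₂ ^ s) := by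
    rcases le_total 0 s with hs | hs
    · exact le_max_of_le_right (rpow_le_rpow (by positivity) ((div_le_iff₀ hρ).2 ht.2) hs)
    · exact le_max_of_le_left (rpow_le_rpow_of_nonpos hc₁ ((le_div_iff₀ hρ).2 ht.1) hs)
  have hlogt : log ρ / 2 ≤ log t := by
    have := log_le_log (mul_pos hc₁ hρ) ht.1
    rw [log_mul hc₁.ne' hρ.ne'] at this
    linarith
  calc t ^ s / log t ^ A = (t / ρ) ^ s * ρ ^ s / log t ^ A := by
        rw [div_rpow ht₀.le hρ.le, div_mul_cancel₀ _ (rpow_pos_of_pos hρ s).ne']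
    _ ≤ max (c₁ ^ s) (c₂ ^ s) * ρ ^ s / (log ρ / 2) ^ A := by gcongr
    _ = max (c₁ ^ s) (c₂ ^ s) * 2 ^ A * (ρ ^ s / log ρ ^ A) := by
        rw [div_rpow hlogρ.le zero_le_two]
        field_simp

lemma Asymptotics.IsBigO.exists_bound_on_Icc_mul {g : ℝ → ℝ} {s A c₁ c₂ : ℝ} (hA : 0 ≤ A)
    (hc₁ : 0 < c₁) (hg : g =O[atTop] fun t => t ^ s / log t ^ A) :
    ∃ K, ∀ᶠ ρ in atTop, ∀ t ∈ Icc (c₁ * ρ) (c₂ * ρ), ‖g t‖ ≤ K * ‖ρ ^ s / log ρ ^ A‖ := by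
  obtain ⟨C, hC₀, hC⟩ := hg.exists_pos
  obtain ⟨T, hT⟩ := eventually_atTop.1 hC.bound
  refine ⟨C * (max (c₁ ^ s) (c₂ ^ s) * 2 ^ A), ?_⟩
  filter_upwards [rpow_div_log_rpow_le_of_mem_Icc (s := s) (c₂ := c₂) hA hc₁,
    (tendsto_id.const_mul_atTop hc₁).eventually_ge_atTop (max T 1)] with ρ hρ hρT t ht
  have hTt : max T 1 ≤ t := hρT.trans ht.1
  have ht₁ : 1 ≤ t := le_of_max_le_right hTt
  have hlog : 0 ≤ log t := log_nonneg ht₁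
  calc ‖g t‖ ≤ C * ‖t ^ s / log t ^ A‖ := hT t (le_of_max_le_left hTt)
    _ ≤ C * (max (c₁ ^ s) (c₂ ^ s) * 2 ^ A * ‖ρ ^ s / log ρ ^ A‖) := by
        rw [norm_of_nonneg (div_nonneg (rpow_nonneg (by linarith) _) (rpow_nonneg hlog _))]
        exact mul_le_mul_of_nonneg_left ((hρ t ht).trans (by gcongr; exact le_norm_self _))
          hC₀.le
    _ = _ := by ring

lemma Asymptotics.IsBigO.comp_of_eventually_mem_Icc {g u : ℝ → ℝ} {s A c₁ c₂ : ℝ} (hA : 0 ≤ A)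
    (hc₁ : 0 < c₁) (hg : g =O[atTop] fun t => t ^ s / log t ^ A)
    (hu : ∀ᶠ ρ in atTop, u ρ ∈ Icc (c₁ * ρ) (c₂ * ρ)) :
    (fun ρ => g (u ρ)) =O[atTop] fun ρ => ρ ^ s / log ρ ^ A := by
  obtain ⟨K, hK⟩ := hg.exists_bound_on_Icc_mul (c₂ := c₂) hA hc₁
  exact .of_bound K (by filter_upwards [hK, hu] with ρ hK hu using hK _ hu)

lemma Asymptotics.IsBigO.intervalIntegral_of_eventually_mem_Icc {g u v : ℝ → ℝ} {s A c₁ c₂ : ℝ}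
    (hA : 0 ≤ A) (hc₁ : 0 < c₁) (hg : g =O[atTop] fun t => t ^ s / log t ^ A)
    (hu : ∀ᶠ ρ in atTop, u ρ ∈ Icc (c₁ * ρ) (c₂ * ρ))
    (hv : ∀ᶠ ρ in atTop, v ρ ∈ Icc (c₁ * ρ) (c₂ * ρ)) :
    (fun ρ => ∫ t in u ρ..v ρ, g t) =O[atTop] fun ρ => ρ ^ (s + 1) / log ρ ^ A := by
  obtain ⟨K, hK⟩ := hg.exists_bound_on_Icc_mul (c₂ := c₂) hA hc₁
  refine .of_bound (K * (c₂ - c₁)) ?_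
  filter_upwards [hK, hu, hv, eventually_gt_atTop 0] with ρ hK hu hv hρ
  have hlen : |v ρ - u ρ| ≤ (c₂ - c₁) * ρ := by
    rw [sub_mul]; exact abs_sub_le_of_le_of_le hv.1 hv.2 hu.1 hu.2
  have hK₀ : 0 ≤ K * ‖ρ ^ s / log ρ ^ A‖ := (norm_nonneg _).trans (hK _ hu)
  calc ‖∫ t in u ρ..v ρ, g t‖ ≤ K * ‖ρ ^ s / log ρ ^ A‖ * |v ρ - u ρ| :=
        norm_integral_le_of_norm_le_const fun t ht =>
          hK t (Set.uIcc_subset_Icc hu hv (Set.uIoc_subset_uIcc ht))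
    _ ≤ K * ‖ρ ^ s / log ρ ^ A‖ * ((c₂ - c₁) * ρ) := by gcongr
    _ = K * (c₂ - c₁) * ‖ρ ^ (s + 1) / log ρ ^ A‖ := by
        rw [rpow_add_one hρ.ne', mul_div_right_comm, norm_mul, norm_of_nonneg hρ.le]
        ring

lemma hasDerivAt_log_div_rpow (σ : ℝ) {t : ℝ} (ht : 0 < t) :
    HasDerivAt (fun u => log u / u ^ σ) ((1 - σ * log t) / t ^ (σ + 1)) t := by
  refine ((hasDerivAt_log ht.ne').div (hasDerivAt_rpow_const (p := σ) (Or.inl ht.ne'))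
    (rpow_pos_of_pos ht σ).ne').congr_deriv ?_
  rw [rpow_sub_one ht.ne', rpow_add_one ht.ne']
  field_simp

lemma isBigO_log_div_rpow_mul {E : ℝ → ℝ} {σ A : ℝ}
    (hE : E =O[atTop] fun x => x / log x ^ (A + 1)) :
    (fun t => log t / t ^ σ * E t) =O[atTop] fun t => t ^ (1 - σ) / log t ^ A := by
  refine ((isBigO_refl (fun t => log t / t ^ σ) atTop).mul hE).trans_eventuallyEq ?_
  filter_upwards [eventually_gt_atTop 1] with t ht
  have hlog := log_pos ht
  rw [rpow_add hlog, rpow_one, rpow_sub (by linarith), rpow_one]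
  field_simp

lemma isBigO_deriv_log_div_rpow_mul {E : ℝ → ℝ} {σ A : ℝ}
    (hE : E =O[atTop] fun x => x / log x ^ (A + 1)) :
    (fun t => (1 - σ * log t) / t ^ (σ + 1) * E t) =O[atTop] fun t => t ^ (-σ) / log t ^ A := by
  have hnum : (fun t => 1 - σ * log t) =O[atTop] log :=
    isLittleO_const_log_atTop.isBigO.sub ((isBigO_refl _ _).const_mul_left σ)
  refine ((hnum.mul (isBigO_refl (fun t => (t ^ (σ + 1))⁻¹) atTop)).mul hE).congr' ?_ ?_
  · exact .of_eq (by simp only [div_eq_mul_inv])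
  filter_upwards [eventually_gt_atTop 1] with t ht
  have hlog := log_pos ht
  rw [rpow_add hlog, rpow_one, rpow_add (by linarith), rpow_one, rpow_neg (by linarith)]
  field_simp

lemma isBigO_abel_remainder {E u v : ℝ → ℝ} (σ : ℝ) {A c₁ c₂ : ℝ} (hA : 0 ≤ A) (hc₁ : 0 < c₁)
    (hE : E =O[atTop] fun x => x / log x ^ (A + 1))
    (hu : ∀ᶠ ρ in atTop, u ρ ∈ Icc (c₁ * ρ) (c₂ * ρ))
    (hv : ∀ᶠ ρ in atTop, v ρ ∈ Icc (c₁ * ρ) (c₂ * ρ)) :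
    (fun ρ => log (v ρ) / v ρ ^ σ * E (v ρ) - log (u ρ) / u ρ ^ σ * E (u ρ)
        - ∫ t in u ρ..v ρ, (1 - σ * log t) / t ^ (σ + 1) * E t) =O[atTop]
      fun ρ => ρ ^ (1 - σ) / log ρ ^ A := by
  have hfE := isBigO_log_div_rpow_mul (σ := σ) hE
  have hint := (isBigO_deriv_log_div_rpow_mul (σ := σ) hE).intervalIntegral_of_eventually_mem_Icc
    hA hc₁ hu hv
  rw [neg_add_eq_sub] at hint
  exact ((hfE.comp_of_eventually_mem_Icc hA hc₁ hv).sub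
    (hfE.comp_of_eventually_mem_Icc hA hc₁ hu)).sub hint

lemma hasDerivAt_Li {t : ℝ} (ht : 1 < t) : HasDerivAt Li (1 / log t) t := by
  have hcont : ContinuousOn (fun u => 1 / log u) (Ioi 1) :=
    continuousOn_const.div (continuousOn_log.mono fun u hu => (zero_lt_one.trans hu).ne')
      fun u hu => (log_pos hu).ne'
  have hsub : uIcc 2 t ⊆ Ioi 1 := fun u hu => (lt_min one_lt_two ht).trans_le hu.1
  exact integral_hasDerivAt_right ((hcont.mono hsub).intervalIntegrable)
    (hcont.stronglyMeasurableAtFilter isOpen_Ioi t ht)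
    (hcont.continuousAt (Ioi_mem_nhds ht))

lemma sum_mul_sub_integral_mul_eq_sub_sub_integral_mul (c : ℕ → ℝ) {f f' F φ : ℝ → ℝ} {a b : ℝ}
    (ha : 0 ≤ a) (hab : a ≤ b) (hf : ∀ t ∈ Icc a b, HasDerivAt f (f' t) t)
    (hF : ∀ t ∈ Icc a b, HasDerivAt F (φ t) t)
    (hf' : ContinuousOn f' (Icc a b)) (hφ : ContinuousOn φ (Icc a b)) :
    ∑ k ∈ Ioc ⌊a⌋₊ ⌊b⌋₊, f k * c k - ∫ t in a..b, f t * φ t =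
      f b * (∑ k ∈ Icc 0 ⌊b⌋₊, c k - F b) - f a * (∑ k ∈ Icc 0 ⌊a⌋₊, c k - F a)
        - ∫ t in a..b, f' t * (∑ k ∈ Icc 0 ⌊t⌋₊, c k - F t) := by
  have hderiv : EqOn (deriv f) f' (Icc a b) := fun t ht => (hf t ht).deriv
  have habel := sum_mul_eq_sub_sub_integral_mul c ha hab (fun t ht => (hf t ht).differentiableAt)
    (hf'.integrableOn_Icc.congr_fun hderiv.symm measurableSet_Icc)
  have hIoc : ∫ t in Ioc a b, deriv f t * ∑ k ∈ Icc 0 ⌊t⌋₊, c k =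
      ∫ t in a..b, f' t * ∑ k ∈ Icc 0 ⌊t⌋₊, c k := by
    rw [integral_of_le hab]
    exact setIntegral_congr_fun measurableSet_Ioc fun t ht => by
      simp only [hderiv (Ioc_subset_Icc_self ht)]
  rw [hIoc] at habel
  rw [← uIcc_of_le hab] at hf hF hf' hφ
  have hparts := integral_mul_deriv_eq_deriv_mul hf hF hf'.intervalIntegrable hφ.intervalIntegrable
  have hFcont : ContinuousOn F (uIcc a b) := fun t ht => (hF t ht).continuousAt.continuousWithinAt
  have hf'S : IntervalIntegrable (fun t => f' t * ∑ k ∈ Icc 0 ⌊t⌋₊, c k) volume a b := by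
    rw [intervalIntegrable_iff_integrableOn_Icc_of_le hab]
    exact integrableOn_mul_sum_Icc c ha (by rw [← uIcc_of_le hab]; exact hf'.integrableOn_uIcc)
  simp only [mul_sub]
  have hf'F : IntervalIntegrable (fun t => f' t * F t) volume a b :=
    (hf'.mul hFcont).intervalIntegrable
  rw [integral_sub hf'S hf'F, habel, hparts]
  ring

noncomputable def primeSumError (aL : ℕ → ℂ) (κ x : ℝ) : ℝ :=
  (∑ p ∈ primesUpTo x, ‖aL p‖ ^ 2) - κ * Li x

lemma primesIn_eq_filter_Ioc (a b ρ : ℝ) :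
    primesIn a b ρ = (Finset.Ioc (⌈a * ρ⌉₊ - 1) ⌊b * ρ⌋₊).filter Nat.Prime := by
  ext p
  simp only [primesIn, Finset.mem_filter, Finset.mem_Iic, Finset.mem_Ioc]
  constructor
  · rintro ⟨hpb, hp, hap, -⟩
    have := Nat.ceil_le.2 hap
    have := hp.pos
    exact ⟨⟨by omega, hpb⟩, hp⟩
  · rintro ⟨⟨hap, hpb⟩, hp⟩
    exact ⟨hpb, hp, Nat.ceil_le.1 (by omega), (Nat.le_floor_iff' hp.ne_zero).1 hpb⟩

lemma sum_prime_log_div_rpow_sub_eq (aL : ℕ → ℂ) (κ : ℝ) {σ : ℝ} (hσ : σ ≠ 1) {m : ℕ} {β : ℝ}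
    (hm : 1 < m) (hmβ : (m : ℝ) ≤ β) :
    ∑ p ∈ (Finset.Ioc m ⌊β⌋₊).filter Nat.Prime, ‖aL p‖ ^ 2 * log p / (p : ℝ) ^ σ
        - κ * ((β ^ (1 - σ) - (m : ℝ) ^ (1 - σ)) / (1 - σ)) =
      log β / β ^ σ * primeSumError aL κ β - log m / (m : ℝ) ^ σ * primeSumError aL κ m
        - ∫ t in (m : ℝ)..β, (1 - σ * log t) / t ^ (σ + 1) * primeSumError aL κ t := by
  have hm₁ : (1 : ℝ) < m := by exact_mod_cast hm
  have hgt : ∀ t ∈ Icc (m : ℝ) β, 1 < t := fun t ht => hm₁.trans_le ht.1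
  have hpos : ∀ t ∈ Icc (m : ℝ) β, 0 < t := fun t ht => zero_lt_one.trans (hgt t ht)
  have hlog : ContinuousOn log (Icc (m : ℝ) β) :=
    continuousOn_log.mono fun t ht => (hpos t ht).ne'
  have hf' : ContinuousOn (fun t => (1 - σ * log t) / t ^ (σ + 1)) (Icc (m : ℝ) β) :=
    (continuousOn_const.sub (continuousOn_const.mul hlog)).div
      (continuousOn_id.rpow_const fun t ht => Or.inl (hpos t ht).ne')
      fun t ht => (rpow_pos_of_pos (hpos t ht) _).ne'
  have hφ : ContinuousOn (fun t => κ * (1 / log t)) (Icc (m : ℝ) β) :=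
    continuousOn_const.mul (continuousOn_const.div hlog fun t ht => (log_pos (hgt t ht)).ne')
  have habel := sum_mul_sub_integral_mul_eq_sub_sub_integral_mul
    (fun k => if k.Prime then ‖aL k‖ ^ 2 else 0) m.cast_nonneg hmβ
    (fun t ht => hasDerivAt_log_div_rpow σ (hpos t ht))
    (fun t ht => (hasDerivAt_Li (hgt t ht)).const_mul κ) hf' hφ
  have hmain : ∫ t in (m : ℝ)..β, log t / t ^ σ * (κ * (1 / log t)) =
      κ * ((β ^ (1 - σ) - (m : ℝ) ^ (1 - σ)) / (1 - σ)) := by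
    have hnot : (0 : ℝ) ∉ uIcc (m : ℝ) β := by
      rw [uIcc_of_le hmβ]; exact fun h => (hpos 0 h).false
    rw [integral_congr (g := fun t => κ * t ^ (-σ)) fun t ht => ?_,
      intervalIntegral.integral_const_mul,
      integral_rpow (Or.inr ⟨fun h => hσ (by linarith), hnot⟩), neg_add_eq_sub]
    rw [uIcc_of_le hmβ] at ht
    have := (log_pos (hgt t ht)).ne'
    simp only [rpow_neg (hpos t ht).le]
    field_simp
  rw [hmain] at habel
  have hS : ∀ x, ∑ p ∈ primesUpTo x, ‖aL p‖ ^ 2 =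
      ∑ k ∈ Icc 0 ⌊x⌋₊, if k.Prime then ‖aL k‖ ^ 2 else 0 := fun x => by
    rw [primesUpTo, sum_filter]; rfl
  have hsum : ∑ p ∈ (Finset.Ioc m ⌊β⌋₊).filter Nat.Prime, ‖aL p‖ ^ 2 * log p / (p : ℝ) ^ σ =
      ∑ k ∈ Finset.Ioc m ⌊β⌋₊, log k / (k : ℝ) ^ σ * if k.Prime then ‖aL k‖ ^ 2 else 0 := by
    rw [sum_filter]
    exact sum_congr rfl fun k _ => by split_ifs <;> ring
  simpa only [primeSumError, hS, hsum, Nat.floor_natCast] using habel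

lemma natCast_ceil_sub_one_mem_Icc {x : ℝ} (hx : 0 < x) :
    ((⌈x⌉₊ - 1 : ℕ) : ℝ) ∈ Icc (x - 1) x := by
  rw [Nat.cast_sub (Nat.one_le_iff_ne_zero.2 (Nat.ceil_pos.2 hx).ne'), Nat.cast_one]
  exact ⟨by linarith [Nat.le_ceil x], by linarith [Nat.ceil_lt_add_one hx.le]⟩

lemma sum_primesIn_sub_eq (aL : ℕ → ℂ) (κ : ℝ) {σ a b ρ : ℝ} (hσ : σ ≠ 1) (ha : 0 ≤ a)
    (hab : a ≤ b) (hρ : 0 ≤ ρ) {m : ℕ} (hm : m = ⌈a * ρ⌉₊ - 1) (h1m : 1 < m) :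
    (∑ p ∈ primesIn a b ρ, ‖aL p‖ ^ 2 * log p / (p : ℝ) ^ σ) -
        κ * (ρ ^ (1 - σ) / (1 - σ)) * (b ^ (1 - σ) - a ^ (1 - σ)) =
      (log (b * ρ) / (b * ρ) ^ σ * primeSumError aL κ (b * ρ)
          - log m / (m : ℝ) ^ σ * primeSumError aL κ m
          - ∫ t in (m : ℝ)..b * ρ, (1 - σ * log t) / t ^ (σ + 1) * primeSumError aL κ t)
        + κ / (1 - σ) * ((a * ρ) ^ (1 - σ) - (m : ℝ) ^ (1 - σ)) := by
  have haρ : 0 < a * ρ := Nat.ceil_pos.1 (by omega)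
  have hma : (m : ℝ) ≤ a * ρ := hm ▸ (natCast_ceil_sub_one_mem_Icc haρ).2
  rw [primesIn_eq_filter_Ioc, ← hm, ← sum_prime_log_div_rpow_sub_eq aL κ hσ h1m
    (hma.trans (by gcongr)), mul_rpow (ha.trans hab) hρ, mul_rpow ha hρ]
  have : 1 - σ ≠ 0 := sub_ne_zero.2 hσ.symm
  field_simp
  ring

lemma abs_rpow_sub_rpow_le_one {x y s : ℝ} (hy : 0 ≤ y) (hyx : y ≤ x) (hxy : x ≤ y + 1)
    (hs₀ : 0 ≤ s) (hs₁ : s ≤ 1) : |x ^ s - y ^ s| ≤ 1 := by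
  have hsub : x ^ s ≤ y ^ s + (x - y) ^ s := by
    simpa using rpow_add_le_add_rpow hy (sub_nonneg.2 hyx) hs₀ hs₁
  have hle : (x - y) ^ s ≤ 1 := rpow_le_one (sub_nonneg.2 hyx) (by linarith) hs₀
  rw [abs_of_nonneg (sub_nonneg.2 (rpow_le_rpow hy hyx hs₀))]
  linarith

lemma isBigO_rpow_sub_rpow_ceil_sub_one {a s : ℝ} (ha : 0 < a) (hs₀ : 0 ≤ s) (hs₁ : s ≤ 1) :
    (fun ρ => (a * ρ) ^ s - ((⌈a * ρ⌉₊ - 1 : ℕ) : ℝ) ^ s) =O[atTop] fun _ => (1 : ℝ) := by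
  refine .of_bound 1 ?_
  filter_upwards [(tendsto_id.const_mul_atTop ha).eventually_ge_atTop 1] with ρ hρ
  have hm := natCast_ceil_sub_one_mem_Icc (x := a * ρ) (by simp only [id] at hρ; linarith)
  rw [norm_one, one_mul, norm_eq_abs]
  exact abs_rpow_sub_rpow_le_one (by linarith [hm.1]) hm.2 (by linarith [hm.1]) hs₀ hs₁

lemma isBigO_one_rpow_div_log_rpow (A : ℝ) {s : ℝ} (hs : 0 < s) :
    (fun _ => (1 : ℝ)) =O[atTop] fun ρ => ρ ^ s / log ρ ^ A := by
  refine .of_bound 1 ?_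
  filter_upwards [(isLittleO_log_rpow_rpow_atTop A hs).bound one_pos, eventually_gt_atTop 1]
    with ρ hlog hρ
  have hA := rpow_pos_of_pos (log_pos hρ) A
  have hs := rpow_pos_of_pos (zero_lt_one.trans hρ) s
  rw [one_mul, norm_of_nonneg hA.le, norm_of_nonneg hs.le] at hlog
  rw [norm_one, one_mul, norm_of_nonneg (div_pos hs hA).le, one_le_div hA]
  exact hlog

lemma eventually_ceil_sub_one_mem_Icc {a b : ℝ} (ha : 0 < a) (hab : a ≤ b) :
    ∀ᶠ ρ in atTop, 1 < ⌈a * ρ⌉₊ - 1 ∧ ((⌈a * ρ⌉₊ - 1 : ℕ) : ℝ) ∈ Icc (a / 2 * ρ) (b * ρ) := by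
  filter_upwards [(tendsto_id.const_mul_atTop ha).eventually_ge_atTop 3, eventually_ge_atTop 0]
    with ρ haρ hρ
  simp only [id] at haρ
  have hm := natCast_ceil_sub_one_mem_Icc (x := a * ρ) (by linarith)
  exact ⟨(Nat.one_lt_cast (α := ℝ)).1 (by linarith [hm.1]), by linarith [hm.1],
    hm.2.trans (by gcongr)⟩

theorem sum_sq_log_window_general (σ₀ a b : ℝ) (hσ : σ₀ ∈ Set.Ioo (1/2 : ℝ) 1)
    (ha : 0 < a) (hab : a < b) (aL : ℕ → ℂ) (κ : ℝ)
    (h : ∀ A : ℝ, 0 < A →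
      (fun x : ℝ => (∑ p ∈ primesUpTo x, ‖aL p‖ ^ 2) - κ * Li x) =O[atTop]
        (fun x : ℝ => x / (Real.log x) ^ A)) :
    ∀ A : ℝ, 0 < A →
      (fun ρ : ℝ => (∑ p ∈ primesIn a b ρ, ‖aL p‖ ^ 2 * Real.log p / (p : ℝ) ^ σ₀) -
        κ * (ρ ^ (1 - σ₀) / (1 - σ₀)) * (b ^ (1 - σ₀) - a ^ (1 - σ₀))) =O[atTop]
      (fun ρ : ℝ => ρ ^ (1 - σ₀) / (Real.log ρ) ^ A) := by
  intro A hA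
  have hσ₁ : 0 < 1 - σ₀ := sub_pos.2 hσ.2
  have hwindow := eventually_ceil_sub_one_mem_Icc ha hab.le
  have hupper : ∀ᶠ ρ in atTop, b * ρ ∈ Icc (a / 2 * ρ) (b * ρ) :=
    (eventually_ge_atTop 0).mono fun ρ hρ => ⟨by gcongr; linarith, le_rfl⟩
  have hremainder := isBigO_abel_remainder (E := primeSumError aL κ) σ₀ hA.le (half_pos ha)
    (h (A + 1) (by linarith)) (hwindow.mono fun _ hρ => hρ.2) hupper
  have hboundary := ((isBigO_rpow_sub_rpow_ceil_sub_one ha hσ₁.le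
    (by linarith [hσ.1])).const_mul_left (κ / (1 - σ₀))).trans
    (isBigO_one_rpow_div_log_rpow A hσ₁)
  refine (hremainder.add hboundary).congr' ?_ .rfl
  filter_upwards [hwindow, eventually_ge_atTop 0] with ρ hρ hρ₀
  exact (sum_primesIn_sub_eq aL κ hσ.2.ne ha.le hab.le hρ₀ rfl hρ.1).symm

/-- Asymptotics for `∑_{aρ ≤ p ≤ bρ} |a_L(p)|² log p / p^{σ₀}`. -/
theorem sum_sq_log_window (σ₀ a b : ℝ) (hσ : σ₀ ∈ Set.Ioo (1/2 : ℝ) 1)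
    (ha : 0 < a) (hab : a < b) (aL : ℕ → ℂ) (κ : ℝ) (hκ : 0 < κ)
    (h : ∀ A : ℝ, 0 < A →
      (fun x : ℝ => (∑ p ∈ primesUpTo x, ‖aL p‖ ^ 2) - κ * Li x) =O[atTop]
        (fun x : ℝ => x / (Real.log x) ^ A)) :
    ∀ A : ℝ, 0 < A →
      (fun ρ : ℝ => (∑ p ∈ primesIn a b ρ, ‖aL p‖ ^ 2 * Real.log p / (p : ℝ) ^ σ₀) -
        κ * (ρ ^ (1 - σ₀) / (1 - σ₀)) * (b ^ (1 - σ₀) - a ^ (1 - σ₀))) =O[atTop]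
      (fun ρ : ℝ => ρ ^ (1 - σ₀) / (Real.log ρ) ^ A) :=
  sum_sq_log_window_general σ₀ a b hσ ha hab aL κ h
end

section
/- There exists an absolute constant C > 0 such that for every real ρ ≥ 3 and every σ₀ ∈ [1/2, 1], ∑_{k ≥ 2} ∑_{p prime : e^{−1}ρ ≤ p^k ≤ eρ} p^{−k σ₀} ≤ C·ρ^{1/2 − σ₀}. -/
open Finset Real

/-!
Since `p^k ≥ e⁻¹ρ`, every term is at most `e ρ^{-σ₀}`, and for fixed `k` there are at most
`(eρ)^{1/k} + 1 ≤ 2e ρ^{1/k}` primes with `p^k ≤ eρ`; so the `k`-th inner sum is `≪ ρ^{1/k - σ₀}`.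
The term `k = 2` gives `ρ^{1/2 - σ₀}`, and the remaining `O(log ρ) = O(ρ^{1/6})` values of `k`
contribute `≪ ρ^{1/6} ρ^{1/3 - σ₀}`.
-/

lemma rpow_neg_le_exp_one_mul_rpow_neg {x ρ σ : ℝ} (hρ : 0 < ρ) (hσ₀ : 0 ≤ σ) (hσ₁ : σ ≤ 1)
    (hx : exp (-1) * ρ ≤ x) : x ^ (-σ) ≤ exp 1 * ρ ^ (-σ) :=
  calc x ^ (-σ) ≤ (exp (-1) * ρ) ^ (-σ) :=
        rpow_le_rpow_of_nonpos (by positivity) hx (by linarith)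
    _ = exp σ * ρ ^ (-σ) := by
        rw [mul_rpow (exp_pos _).le hρ.le, ← exp_mul, neg_one_mul, neg_neg]
    _ ≤ exp 1 * ρ ^ (-σ) := by gcongr

lemma card_le_rpow_one_div_add_one (s : Finset ℕ) {k : ℕ} (hk : k ≠ 0) {X : ℝ} (hX : 0 ≤ X)
    (hs : ∀ p ∈ s, (p : ℝ) ^ k ≤ X) : (#s : ℝ) ≤ X ^ (1 / k : ℝ) + 1 := by
  have hsub : s ⊆ Iic ⌊X ^ (1 / k : ℝ)⌋₊ := fun p hp => by
    rw [mem_Iic, Nat.le_floor_iff (by positivity)]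
    calc (p : ℝ) = ((p : ℝ) ^ k) ^ (1 / k : ℝ) := by
          rw [one_div, pow_rpow_inv_natCast p.cast_nonneg hk]
      _ ≤ X ^ (1 / k : ℝ) := by gcongr; exact hs p hp
  calc (#s : ℝ) ≤ #(Iic ⌊X ^ (1 / k : ℝ)⌋₊) := by exact_mod_cast card_le_card hsub
    _ = ⌊X ^ (1 / k : ℝ)⌋₊ + 1 := by rw [Nat.card_Iic]; push_cast; ring
    _ ≤ X ^ (1 / k : ℝ) + 1 := by gcongr; exact Nat.floor_le (by positivity)

lemma sum_rpow_neg_le_of_pow_mem_Icc (s : Finset ℕ) {k : ℕ} (hk : k ≠ 0) {ρ σ : ℝ}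
    (hρ : 1 ≤ ρ) (hσ₀ : 0 ≤ σ) (hσ₁ : σ ≤ 1)
    (hs : ∀ p ∈ s, (p : ℝ) ^ k ∈ Set.Icc (exp (-1) * ρ) (exp 1 * ρ)) :
    ∑ p ∈ s, (p : ℝ) ^ (-(k : ℝ) * σ) ≤ 2 * exp 1 ^ 2 * ρ ^ (1 / k - σ : ℝ) := by
  have hρ₀ : 0 < ρ := by linarith
  have hterm : ∀ p ∈ s, (p : ℝ) ^ (-(k : ℝ) * σ) ≤ exp 1 * ρ ^ (-σ) := fun p hp => by
    rw [neg_mul, ← mul_neg, rpow_mul p.cast_nonneg, rpow_natCast]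
    exact rpow_neg_le_exp_one_mul_rpow_neg hρ₀ hσ₀ hσ₁ (hs p hp).1
  have hroot : (exp 1 * ρ) ^ (1 / k : ℝ) ≤ exp 1 * ρ ^ (1 / k : ℝ) := by
    rw [mul_rpow (exp_pos 1).le hρ₀.le, exp_one_rpow]
    gcongr
    exact div_le_one_of_le₀ (by exact_mod_cast Nat.one_le_iff_ne_zero.mpr hk) k.cast_nonneg
  have hcard : (#s : ℝ) ≤ 2 * (exp 1 * ρ ^ (1 / k : ℝ)) := by
    have h₁ : 1 ≤ exp 1 * ρ ^ (1 / k : ℝ) :=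
      one_le_mul_of_one_le_of_one_le (one_le_exp zero_le_one) (one_le_rpow hρ (by positivity))
    linarith [card_le_rpow_one_div_add_one s hk (by positivity) fun p hp => (hs p hp).2]
  calc ∑ p ∈ s, (p : ℝ) ^ (-(k : ℝ) * σ) ≤ #s * (exp 1 * ρ ^ (-σ)) := by
        simpa only [nsmul_eq_mul] using sum_le_card_nsmul s _ _ hterm
    _ ≤ 2 * (exp 1 * ρ ^ (1 / k : ℝ)) * (exp 1 * ρ ^ (-σ)) := by gcongr
    _ = 2 * exp 1 ^ 2 * ρ ^ (1 / k - σ : ℝ) := by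
        rw [sub_eq_add_neg, rpow_add hρ₀]; ring

lemma sum_Icc_two_rpow_one_div_le {ρ : ℝ} (hρ : 1 ≤ ρ) (K : ℕ) :
    ∑ k ∈ Icc 2 K, ρ ^ (1 / k : ℝ) ≤ ρ ^ (1 / 2 : ℝ) + K * ρ ^ (1 / 3 : ℝ) := by
  have hsub : Icc 2 K ⊆ insert 2 (Icc 3 K) := fun k hk => by
    simp only [mem_insert, mem_Icc] at hk ⊢; omega
  have htail : ∀ k ∈ Icc 3 K, ρ ^ (1 / k : ℝ) ≤ ρ ^ (1 / 3 : ℝ) := fun k hk => by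
    have h₃ : (3 : ℝ) ≤ k := by exact_mod_cast (mem_Icc.mp hk).1
    exact rpow_le_rpow_of_exponent_le hρ (one_div_le_one_div_of_le (by norm_num) h₃)
  have hcard : (#(Icc 3 K) : ℝ) ≤ K := by
    rw [Nat.card_Icc]; exact_mod_cast Nat.sub_le_of_le_add (by omega)
  calc ∑ k ∈ Icc 2 K, ρ ^ (1 / k : ℝ) ≤ ∑ k ∈ insert 2 (Icc 3 K), ρ ^ (1 / k : ℝ) :=
        sum_le_sum_of_subset_of_nonneg hsub fun _ _ _ => by positivity
    _ = ρ ^ (1 / 2 : ℝ) + ∑ k ∈ Icc 3 K, ρ ^ (1 / k : ℝ) := by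
        rw [sum_insert (by simp)]; norm_num
    _ ≤ ρ ^ (1 / 2 : ℝ) + #(Icc 3 K) * ρ ^ (1 / 3 : ℝ) := by
        simpa only [nsmul_eq_mul, add_le_add_iff_left] using sum_le_card_nsmul _ _ _ htail
    _ ≤ ρ ^ (1 / 2 : ℝ) + K * ρ ^ (1 / 3 : ℝ) := by gcongr

lemma logb_two_exp_one_mul_le {ρ : ℝ} (hρ : 1 ≤ ρ) :
    logb 2 (exp 1 * ρ) ≤ 14 * ρ ^ (1 / 6 : ℝ) := by
  have hρ₀ : 0 < ρ := by linarith
  have h₁ : 1 ≤ ρ ^ (1 / 6 : ℝ) := one_le_rpow hρ (by norm_num)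
  have hlog : log ρ ≤ 6 * ρ ^ (1 / 6 : ℝ) := by
    have := log_le_rpow_div hρ₀.le (by norm_num : (0 : ℝ) < 1 / 6)
    linarith [show ρ ^ (1 / 6 : ℝ) / (1 / 6) = 6 * ρ ^ (1 / 6 : ℝ) by ring]
  have hlog2 := log_two_gt_d9
  rw [logb, log_mul (exp_pos 1).ne' hρ₀.ne', log_exp, div_le_iff₀ (by linarith)]
  nlinarith

lemma sum_Icc_two_logb_rpow_one_div_le {ρ : ℝ} (hρ : 1 ≤ ρ) :
    ∑ k ∈ Icc 2 ⌊logb 2 (exp 1 * ρ)⌋₊, ρ ^ (1 / k : ℝ) ≤ 15 * ρ ^ (1 / 2 : ℝ) := by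
  have hK : (⌊logb 2 (exp 1 * ρ)⌋₊ : ℝ) ≤ 14 * ρ ^ (1 / 6 : ℝ) :=
    (Nat.floor_le (logb_nonneg one_lt_two (one_le_mul_of_one_le_of_one_le
      (one_le_exp zero_le_one) hρ))).trans (logb_two_exp_one_mul_le hρ)
  have hsplit : ρ ^ (1 / 6 : ℝ) * ρ ^ (1 / 3 : ℝ) = ρ ^ (1 / 2 : ℝ) := by
    rw [← rpow_add (by linarith)]; norm_num
  calc _ ≤ ρ ^ (1 / 2 : ℝ) + ⌊logb 2 (exp 1 * ρ)⌋₊ * ρ ^ (1 / 3 : ℝ) :=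
        sum_Icc_two_rpow_one_div_le hρ _
    _ ≤ ρ ^ (1 / 2 : ℝ) + 14 * ρ ^ (1 / 6 : ℝ) * ρ ^ (1 / 3 : ℝ) := by gcongr
    _ = 15 * ρ ^ (1 / 2 : ℝ) := by rw [mul_assoc, hsplit]; ring

open scoped Classical in
/-- The contribution of prime powers `p^k` with `k ≥ 2` and `e⁻¹ρ ≤ p^k ≤ eρ` is
`O(ρ^{1/2 - σ₀})`, uniformly in `σ₀ ∈ [1/2, 1]`. -/
theorem prime_power_tail_bound :
    ∃ C : ℝ, 0 < C ∧ ∀ ρ : ℝ, 3 ≤ ρ → ∀ σ₀ ∈ Set.Icc (1/2 : ℝ) 1,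
      ∑ k ∈ Finset.Icc 2 ⌊Real.logb 2 (Real.exp 1 * ρ)⌋₊,
        ∑ p ∈ (Finset.Iic ⌊Real.exp 1 * ρ⌋₊).filter
          (fun p : ℕ => p.Prime ∧ Real.exp (-1) * ρ ≤ (p : ℝ) ^ k ∧ (p : ℝ) ^ k ≤ Real.exp 1 * ρ),
          (p : ℝ) ^ (-(k : ℝ) * σ₀) ≤ C * ρ ^ (1/2 - σ₀) := by
  refine ⟨30 * exp 1 ^ 2, by positivity, fun ρ hρ σ₀ ⟨hσ₀, hσ₁⟩ => ?_⟩
  have hρ₁ : 1 ≤ ρ := by linarith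
  calc _ ≤ ∑ k ∈ Icc 2 ⌊logb 2 (exp 1 * ρ)⌋₊, 2 * exp 1 ^ 2 * ρ ^ (1 / k - σ₀ : ℝ) := by
        refine sum_le_sum fun k hk => sum_rpow_neg_le_of_pow_mem_Icc _ ?_ hρ₁ (by linarith) hσ₁
          fun p hp => ?_
        · have := (mem_Icc.mp hk).1; omega
        · exact ⟨(mem_filter.mp hp).2.2.1, (mem_filter.mp hp).2.2.2⟩
    _ = 2 * exp 1 ^ 2 * ρ ^ (-σ₀) * ∑ k ∈ Icc 2 ⌊logb 2 (exp 1 * ρ)⌋₊, ρ ^ (1 / k : ℝ) := by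
        rw [mul_sum]
        refine sum_congr rfl fun k _ => ?_
        rw [sub_eq_add_neg, rpow_add (by linarith)]; ring
    _ ≤ 2 * exp 1 ^ 2 * ρ ^ (-σ₀) * (15 * ρ ^ (1 / 2 : ℝ)) := by
        gcongr; exact sum_Icc_two_logb_rpow_one_div_le hρ₁
    _ = 30 * exp 1 ^ 2 * ρ ^ (1 / 2 - σ₀) := by
        rw [sub_eq_add_neg, rpow_add (by linarith)]; ring
end

section
/- For all real numbers θ, all real β with |β| ≥ 1, and all real τ > 0, one has ∫_{−τ}^{τ} (sin(t/2)/t)²·(1 + cos(θ + βt)) dt ≤ π/2. -/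
/-!
The Fourier transform of the triangle function `max 0 (1 - |x|)` is `sinc (π ξ) ^ 2`, so Fourier
inversion gives `∫ sinc (t / 2) ^ 2 * exp (i β t) dt = 2π max 0 (1 - |β|)`. Writing
`1 + cos (θ + β t)` as the real part of `1 + exp (i θ) exp (i β t)`, the integral over all of `ℝ`
is `π / 2` as soon as `|β| ≥ 1`, and since the integrand is nonnegative, every truncation of it
is at most `π / 2`.
-/

open Real MeasureTheory Set FourierTransform Complex

noncomputable def triangle (x : ℝ) : ℝ := max 0 (1 - |x|)

lemma triangle_eq_zero {x : ℝ} (hx : 1 ≤ |x|) : triangle x = 0 :=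
  max_eq_left (by linarith)

lemma triangle_of_abs_le {x : ℝ} (hx : |x| ≤ 1) : triangle x = 1 - |x| :=
  max_eq_right (by linarith)

lemma triangle_neg (x : ℝ) : triangle (-x) = triangle x := by
  simp [triangle]

lemma continuous_triangle : Continuous triangle := by
  unfold triangle; fun_prop

lemma support_triangle_subset : Function.support triangle ⊆ Ioc (-1) 1 := fun x hx ↦
  Ioo_subset_Ioc_self <| by
    rw [mem_Ioo, ← abs_lt]; exact not_le.1 fun h ↦ hx (triangle_eq_zero h)

lemma hasCompactSupport_triangle : HasCompactSupport triangle :=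
  HasCompactSupport.intro isCompact_Icc fun _ hx ↦
    triangle_eq_zero (not_le.1 (by rwa [abs_le, ← mem_Icc])).le

lemma integrable_triangle : Integrable triangle :=
  continuous_triangle.integrable_of_hasCompactSupport hasCompactSupport_triangle

lemma sinc_sq_le (x : ℝ) : sinc x ^ 2 ≤ 2 * (1 + x ^ 2)⁻¹ := by
  have h₁ : sinc x ^ 2 ≤ 1 := by
    rw [sq_le_one_iff_abs_le_one]; exact abs_sinc_le_one x
  have h₂ : x ^ 2 * sinc x ^ 2 ≤ 1 := by
    rcases eq_or_ne x 0 with rfl | hx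
    · simp
    · rw [sinc_of_ne_zero hx, div_pow, mul_div_cancel₀ _ (pow_ne_zero 2 hx)]
      exact sin_sq_le_one x
  rw [le_mul_inv_iff₀ (by positivity)]
  linarith

lemma integrable_sinc_sq : Integrable fun x ↦ sinc x ^ 2 := by
  refine (integrable_inv_one_add_sq.const_mul 2).mono'
    (continuous_sinc.pow 2).aestronglyMeasurable (ae_of_all _ fun x ↦ ?_)
  rw [Real.norm_eq_abs, abs_of_nonneg (sq_nonneg _)]
  exact sinc_sq_le x

lemma integral_one_sub_mul_cexp {b : ℂ} (hb : b ≠ 0) :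
    ∫ x in (0 : ℝ)..1, (1 - x) * cexp (b * x) = (cexp b - 1 - b) / b ^ 2 := by
  have hderiv (x : ℝ) : HasDerivAt (fun x : ℝ ↦ ((1 - x) / b + 1 / b ^ 2) * cexp (b * x))
      ((1 - x) * cexp (b * x)) x := by
    have hexp : HasDerivAt (fun x : ℝ ↦ cexp (b * x)) (b * cexp (b * x)) x := by
      simpa [mul_comm] using ((ofRealCLM.hasDerivAt (x := x)).const_mul b).cexp
    have hlin : HasDerivAt (fun x : ℝ ↦ (1 - (x : ℂ)) / b + 1 / b ^ 2) (-1 / b) x := by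
      simpa using (((ofRealCLM.hasDerivAt (x := x)).const_sub 1).div_const b).add_const
        (1 / b ^ 2)
    refine (hlin.mul hexp).congr_deriv ?_
    field_simp
    ring
  rw [intervalIntegral.integral_eq_sub_of_hasDerivAt (fun x _ ↦ hderiv x)
    ((by fun_prop : Continuous fun x : ℝ ↦ (1 - x) * cexp (b * x)).intervalIntegrable _ _)]
  simp only [ofReal_one, ofReal_zero, sub_self, zero_div, zero_add, mul_one, mul_zero,
    Complex.exp_zero, sub_zero]
  field_simp
  ring

lemma integral_cexp_mul_triangle {b : ℂ} (hb : b ≠ 0) :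
    ∫ x : ℝ, cexp (b * x) * triangle x = (cexp b + cexp (-b) - 2) / b ^ 2 := by
  have hcont : Continuous fun x : ℝ ↦ cexp (b * x) * triangle x := by
    unfold triangle; fun_prop
  have hright : ∫ x in (0 : ℝ)..1, cexp (b * x) * triangle x = (cexp b - 1 - b) / b ^ 2 := by
    rw [← integral_one_sub_mul_cexp hb]
    refine intervalIntegral.integral_congr fun x hx ↦ ?_
    rw [uIcc_of_le zero_le_one] at hx
    rw [triangle_of_abs_le (abs_le.2 ⟨by linarith [hx.1], hx.2⟩), abs_of_nonneg hx.1]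
    push_cast
    exact mul_comm _ _
  have hleft : ∫ x in (-1 : ℝ)..0, cexp (b * x) * triangle x
      = (cexp (-b) - 1 - -b) / (-b) ^ 2 := by
    have hreflect := intervalIntegral.integral_comp_neg (a := 0) (b := 1)
      fun x : ℝ ↦ cexp (b * x) * triangle x
    rw [neg_zero] at hreflect
    rw [← integral_one_sub_mul_cexp (neg_ne_zero.2 hb), ← hreflect]
    refine intervalIntegral.integral_congr fun x hx ↦ ?_
    rw [uIcc_of_le zero_le_one] at hx
    rw [triangle_neg, triangle_of_abs_le (abs_le.2 ⟨by linarith [hx.1], hx.2⟩),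
      abs_of_nonneg hx.1]
    push_cast
    rw [mul_neg, neg_mul, mul_comm]
  rw [← intervalIntegral.integral_eq_integral_of_support_subset,
    ← intervalIntegral.integral_add_adjacent_intervals (b := 0) (hcont.intervalIntegrable _ _)
      (hcont.intervalIntegrable _ _), hleft, hright]
  · ring
  · exact (Function.support_mul_subset_right _ _).trans
      ((Function.support_comp_subset ofReal_zero _).trans support_triangle_subset)

lemma fourier_triangle_of_ne_zero {ξ : ℝ} (hξ : ξ ≠ 0) :
    𝓕 (fun x ↦ (triangle x : ℂ)) ξ = (sinc (π * ξ) ^ 2 : ℝ) := by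
  have hπξ : (π : ℂ) * ξ ≠ 0 := by exact_mod_cast mul_ne_zero pi_ne_zero hξ
  have hb : -(2 * (π * ξ) * I) ≠ 0 := by simp [hπξ, I_ne_zero]
  have hfourier : 𝓕 (fun x ↦ (triangle x : ℂ)) ξ
      = ∫ x : ℝ, cexp (-(2 * (π * ξ) * I) * x) * triangle x := by
    rw [Real.fourier_real_eq_integral_exp_smul]
    congr 1 with x
    rw [smul_eq_mul]
    push_cast
    ring_nf
  rw [hfourier, integral_cexp_mul_triangle hb, sinc_of_ne_zero (mul_ne_zero pi_ne_zero hξ),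
    neg_neg, show -(2 * (π * ξ) * I) = -(2 * (π * ξ)) * I by ring, add_comm (cexp _),
    ← two_cos]
  push_cast
  rw [Complex.cos_two_mul, Complex.cos_sq', mul_pow, I_sq]
  field_simp
  ring

lemma fourier_triangle :
    𝓕 (fun x ↦ (triangle x : ℂ)) = fun ξ ↦ ((sinc (π * ξ) ^ 2 : ℝ) : ℂ) :=
  Continuous.ext_on (dense_compl_singleton 0)
    (VectorFourier.fourierIntegral_continuous Real.continuous_fourierChar
      (innerSL ℝ).continuous₂ integrable_triangle.ofReal)
    (by fun_prop) fun _ hξ ↦ fourier_triangle_of_ne_zero hξ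

lemma fourierInv_sinc_sq :
    𝓕⁻ (fun ξ ↦ ((sinc (π * ξ) ^ 2 : ℝ) : ℂ)) = fun x ↦ (triangle x : ℂ) := by
  rw [← fourier_triangle]
  refine Continuous.fourierInv_fourier_eq (f := fun x ↦ (triangle x : ℂ))
    (continuous_ofReal.comp continuous_triangle) integrable_triangle.ofReal ?_
  rw [fourier_triangle]
  exact (integrable_sinc_sq.comp_mul_left' pi_ne_zero).ofReal

lemma integral_sinc_sq_mul_cexp (β : ℝ) :
    ∫ t : ℝ, (sinc (t / 2) ^ 2 : ℝ) * cexp (β * t * I) = 2 * π * triangle β := by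
  calc ∫ t : ℝ, (sinc (t / 2) ^ 2 : ℝ) * cexp (β * t * I)
      = ∫ t : ℝ, (fun v : ℝ ↦ cexp (↑(-2 * π * v * -β) * I) • ((sinc (π * v) ^ 2 : ℝ) : ℂ))
          (t / (2 * π)) := by
        congr 1 with t
        beta_reduce
        rw [smul_eq_mul, mul_comm]
        congr 3
        · push_cast; field_simp
        · field_simp
    _ = |2 * π| • ∫ v : ℝ, cexp (↑(-2 * π * v * -β) * I) • ((sinc (π * v) ^ 2 : ℝ) : ℂ) :=
        Measure.integral_comp_div (fun v : ℝ ↦ cexp (↑(-2 * π * v * -β) * I) •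
          ((sinc (π * v) ^ 2 : ℝ) : ℂ)) (2 * π)
    _ = 2 * π * triangle β := by
        rw [← Real.fourier_real_eq_integral_exp_smul, ← Real.fourierInv_eq_fourier_neg,
          fourierInv_sinc_sq, abs_of_pos two_pi_pos, real_smul]
        push_cast
        rfl

lemma one_add_cos_nonneg (x : ℝ) : 0 ≤ 1 + Real.cos x := by
  linarith [neg_one_le_cos x]

lemma integrable_sinc_sq_mul_one_add_cos (θ β : ℝ) :
    Integrable fun t ↦ sinc (t / 2) ^ 2 * (1 + Real.cos (θ + β * t)) :=
  (integrable_sinc_sq.comp_div two_ne_zero).mul_bdd (c := 2) (by fun_prop)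
    (ae_of_all _ fun t ↦ by
      rw [Real.norm_eq_abs, abs_of_nonneg (one_add_cos_nonneg _)]
      linarith [cos_le_one (θ + β * t)])

lemma integral_sinc_sq_mul_one_add_cos (θ β : ℝ) :
    ∫ t, sinc (t / 2) ^ 2 * (1 + Real.cos (θ + β * t))
      = 2 * π * (1 + triangle β * Real.cos θ) := by
  have hint : Integrable fun t : ℝ ↦ ((sinc (t / 2) ^ 2 : ℝ) : ℂ) :=
    (integrable_sinc_sq.comp_div two_ne_zero).ofReal
  have hint_exp : Integrable fun t : ℝ ↦ ((sinc (t / 2) ^ 2 : ℝ) : ℂ) * cexp (β * t * I) :=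
    hint.mul_bdd (c := 1) (by fun_prop) (ae_of_all _ fun t ↦ by
      rw [← ofReal_mul, norm_exp_ofReal_mul_I])
  have hmass : ∫ t : ℝ, ((sinc (t / 2) ^ 2 : ℝ) : ℂ) = 2 * π := by
    simpa [triangle] using integral_sinc_sq_mul_cexp 0
  calc ∫ t, sinc (t / 2) ^ 2 * (1 + Real.cos (θ + β * t))
      = ∫ t, re (((sinc (t / 2) ^ 2 : ℝ) : ℂ)
          + cexp (θ * I) * (((sinc (t / 2) ^ 2 : ℝ) : ℂ) * cexp (β * t * I))) := by
        congr 1 with t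
        rw [mul_left_comm, ← Complex.exp_add, ← add_mul, ← mul_one_add, ← ofReal_mul,
          ← ofReal_add, re_ofReal_mul, add_re, one_re, exp_ofReal_mul_I_re]
    _ = re (∫ t, (((sinc (t / 2) ^ 2 : ℝ) : ℂ)
          + cexp (θ * I) * (((sinc (t / 2) ^ 2 : ℝ) : ℂ) * cexp (β * t * I)))) :=
        integral_re (hint.add (hint_exp.const_mul _))
    _ = re (2 * π + cexp (θ * I) * (2 * π * triangle β)) := by
        rw [integral_add hint (hint_exp.const_mul _), integral_const_mul, hmass,
          integral_sinc_sq_mul_cexp]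
    _ = 2 * π * (1 + triangle β * Real.cos θ) := by
        rw [mul_comm (cexp _), ← ofReal_ofNat, ← ofReal_mul, ← ofReal_mul, add_re, ofReal_re,
          re_ofReal_mul, exp_ofReal_mul_I_re]
        ring

lemma sin_half_div_sq_eq_sinc_sq_div_four {t : ℝ} (ht : t ≠ 0) :
    (Real.sin (t / 2) / t) ^ 2 = sinc (t / 2) ^ 2 / 4 := by
  rw [sinc_of_ne_zero (div_ne_zero ht two_ne_zero)]
  field_simp
  ring

lemma intervalIntegral_le_integral_of_nonneg {f : ℝ → ℝ} {μ : Measure ℝ} {a b : ℝ}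
    (hfi : Integrable f μ) (hf : 0 ≤ᵐ[μ] f) : ∫ x in a..b, f x ∂μ ≤ ∫ x, f x ∂μ := by
  rcases le_total a b with hab | hba
  · rw [intervalIntegral.integral_of_le hab]
    exact setIntegral_le_integral hfi hf
  · rw [intervalIntegral.integral_symm]
    exact (neg_nonpos.2 (intervalIntegral.integral_nonneg_of_ae hba hf)).trans
      (integral_nonneg_of_ae hf)

theorem fejer_integral_bound_general (θ β τ : ℝ) (hβ : 1 ≤ |β|) :
    ∫ t in (-τ)..τ, (Real.sin (t / 2) / t) ^ 2 * (1 + Real.cos (θ + β * t)) ≤ π / 2 := by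
  set f : ℝ → ℝ := fun t ↦ (Real.sin (t / 2) / t) ^ 2 * (1 + Real.cos (θ + β * t))
  set g : ℝ → ℝ := fun t ↦ sinc (t / 2) ^ 2 * (1 + Real.cos (θ + β * t)) / 4
  have hfg : f =ᵐ[volume] g := by
    filter_upwards [Measure.ae_ne volume 0] with t ht
    simp only [f, g, sin_half_div_sq_eq_sinc_sq_div_four ht, div_mul_eq_mul_div]
  have hg : Integrable g := (integrable_sinc_sq_mul_one_add_cos θ β).div_const 4
  have hf : 0 ≤ᵐ[volume] f :=
    ae_of_all _ fun t ↦ mul_nonneg (sq_nonneg _) (one_add_cos_nonneg _)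
  calc ∫ t in (-τ)..τ, f t ≤ ∫ t, f t :=
        intervalIntegral_le_integral_of_nonneg (hg.congr hfg.symm) hf
    _ = ∫ t, g t := integral_congr_ae hfg
    _ = π / 2 := by
        rw [integral_div, integral_sinc_sq_mul_one_add_cos, triangle_eq_zero hβ]
        ring

/-- The Fejér-type integral bound `∫_{-τ}^{τ} (sin(t/2)/t)² (1 + cos(θ + βt)) dt ≤ π/2`
for `|β| ≥ 1`. (The integrand's removable singularity at `t = 0` is a measure-zero
point, so it does not affect the value of the integral.) -/
theorem fejer_integral_bound (θ β τ : ℝ) (hβ : 1 ≤ |β|) (hτ : 0 < τ) :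
    ∫ t in (-τ)..τ, (Real.sin (t / 2) / t) ^ 2 * (1 + Real.cos (θ + β * t)) ≤ π / 2 :=
  fejer_integral_bound_general θ β τ hβ
end

section
/- Let P be a finite set of primes, let σ₀ and t be real numbers, let a : P → ℂ, let θ : P → ℝ, and let w : P → [0, 1]. Then |∑_{p ∈ P} a(p)·w_p·e^{−2πi θ_p}/p^{σ₀} − ∑_{p ∈ P} a(p)·w_p/p^{σ₀ + it}| ≤ 2π·(∑_{p ∈ P} |a(p)|²·w_p/p^{σ₀})^{1/2}·(∑_{p ∈ P} p^{−σ₀}·‖θ_p − t·log p/(2π)‖²)^{1/2}. -/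
open Real Finset

noncomputable def distNearestInt (x : ℝ) : ℝ := |x - round x|

/-!
Factor each difference as `(a_p w_p / p^σ₀) · e^{-2πiθ_p} · (1 - e^{2πi(θ_p - t log p / 2π)})`,
bound the last factor by `2π‖θ_p - t log p / 2π‖` after shifting the exponent by an integer,
and apply Cauchy–Schwarz with weights `w_p p^{-σ₀}`, using `w_p ≤ 1` in the second factor.
-/

open Complex in
theorem norm_exp_two_pi_mul_I_sub_one_le (x : ℝ) :
    ‖exp (2 * π * I * x) - 1‖ ≤ 2 * π * distNearestInt x := by
  have hperiod : exp (2 * π * I * x) = exp (I * ↑(2 * π * (x - round x))) := by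
    rw [← mul_one (exp (I * _)), ← exp_int_mul_two_pi_mul_I (round x), ← Complex.exp_add]
    push_cast
    ring_nf
  rw [hperiod]
  refine norm_exp_I_mul_ofReal_sub_one_le.trans_eq ?_
  rw [distNearestInt, Real.norm_eq_abs, abs_mul, abs_of_pos two_pi_pos]

theorem Real.sum_mul_mul_le_sqrt_mul_sqrt {ι : Type*} (s : Finset ι) {u : ι → ℝ}
    (hu : ∀ i ∈ s, 0 ≤ u i) (f g : ι → ℝ) :
    ∑ i ∈ s, u i * f i * g i ≤
      √(∑ i ∈ s, u i * f i ^ 2) * √(∑ i ∈ s, u i * g i ^ 2) := by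
  have hsq : ∀ i ∈ s, √(u i) ^ 2 = u i := fun i hi => sq_sqrt (hu i hi)
  have hsum : ∀ h : ι → ℝ, ∑ i ∈ s, (√(u i) * h i) ^ 2 = ∑ i ∈ s, u i * h i ^ 2 :=
    fun h => sum_congr rfl fun i hi => by rw [mul_pow, hsq i hi]
  calc ∑ i ∈ s, u i * f i * g i = ∑ i ∈ s, (√(u i) * f i) * (√(u i) * g i) :=
        sum_congr rfl fun i hi => by linear_combination (-(f i * g i)) * hsq i hi
    _ ≤ √(∑ i ∈ s, u i * f i ^ 2) * √(∑ i ∈ s, u i * g i ^ 2) := by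
        rw [← hsum f, ← hsum g]; exact Real.sum_mul_le_sqrt_mul_sqrt s _ _

open Complex in
theorem ofReal_cpow_add_mul_I {x : ℝ} (hx : 0 < x) (σ t : ℝ) :
    (x : ℂ) ^ ((σ : ℂ) + t * I) = ((x ^ σ : ℝ) : ℂ) * exp (↑(t * Real.log x) * I) := by
  rw [cpow_def_of_ne_zero (ofReal_ne_zero.mpr hx.ne'), ← ofReal_log hx.le,
    Real.rpow_def_of_pos hx, ofReal_exp, ← Complex.exp_add]
  push_cast
  ring_nf

open Complex in
theorem norm_mul_exp_div_sub_div_cpow_le {x : ℝ} (hx : 0 < x) (c : ℂ) (σ t θ : ℝ) :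
    ‖c * exp (-2 * π * I * θ) / ((x ^ σ : ℝ) : ℂ) - c / (x : ℂ) ^ ((σ : ℂ) + t * I)‖ ≤
      2 * π * (‖c‖ / x ^ σ) * distNearestInt (θ - t * Real.log x / (2 * π)) := by
  set E := exp (↑(2 * π * θ) * I)
  set F := exp (↑(t * Real.log x) * I)
  have hshift : exp (2 * π * I * ↑(θ - t * Real.log x / (2 * π))) = E * F⁻¹ := by
    rw [← Complex.exp_neg, ← Complex.exp_add]
    congr 1
    push_cast
    field_simp
    ring
  have hE : exp (-2 * π * I * θ) = E⁻¹ := by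
    rw [← Complex.exp_neg]; push_cast; ring_nf
  have hfactor : c * exp (-2 * π * I * θ) / ((x ^ σ : ℝ) : ℂ) - c / (x : ℂ) ^ ((σ : ℂ) + t * I) =
      -(c / ((x ^ σ : ℝ) : ℂ) * E⁻¹) *
        (exp (2 * π * I * ↑(θ - t * Real.log x / (2 * π))) - 1) := by
    rw [hshift, hE, ofReal_cpow_add_mul_I hx]
    field_simp [E, F, Complex.exp_ne_zero]
    ring
  have hcoef : ‖c / ((x ^ σ : ℝ) : ℂ) * E⁻¹‖ = ‖c‖ / x ^ σ := by
    rw [norm_mul, norm_inv, norm_exp_ofReal_mul_I, inv_one, mul_one, norm_div, norm_real,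
      Real.norm_of_nonneg (rpow_nonneg hx.le σ)]
  rw [hfactor, norm_mul, norm_neg, hcoef]
  calc ‖c‖ / x ^ σ * ‖exp (2 * π * I * ↑(θ - t * Real.log x / (2 * π))) - 1‖
      ≤ ‖c‖ / x ^ σ * (2 * π * distNearestInt (θ - t * Real.log x / (2 * π))) := by
        gcongr; exact norm_exp_two_pi_mul_I_sub_one_le _
    _ = _ := by ring

/-- Cauchy–Schwarz step: comparing a twisted Dirichlet polynomial with its
randomized version. -/
theorem twisted_dirichlet_poly_compare (P : Finset ℕ) (hP : ∀ p ∈ P, p.Prime)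
    (σ₀ t : ℝ) (a : ℕ → ℂ) (θ : ℕ → ℝ) (w : ℕ → ℝ)
    (hw : ∀ p ∈ P, w p ∈ Set.Icc (0 : ℝ) 1) :
    ‖(∑ p ∈ P, a p * (w p : ℂ) * Complex.exp (-2 * (π : ℂ) * Complex.I * (θ p : ℂ)) /
          (((p : ℝ) ^ σ₀ : ℝ) : ℂ)) -
        ∑ p ∈ P, a p * (w p : ℂ) / (p : ℂ) ^ ((σ₀ : ℂ) + (t : ℂ) * Complex.I)‖ ≤
      2 * π * Real.sqrt (∑ p ∈ P, ‖a p‖ ^ 2 * w p / (p : ℝ) ^ σ₀) *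
        Real.sqrt (∑ p ∈ P, (p : ℝ) ^ (-σ₀) *
          distNearestInt (θ p - t * Real.log p / (2 * π)) ^ 2) := by
  set d : ℕ → ℝ := fun p => distNearestInt (θ p - t * Real.log p / (2 * π))
  set u : ℕ → ℝ := fun p => w p / (p : ℝ) ^ σ₀
  have hp_pos : ∀ p ∈ P, (0 : ℝ) < p := fun p hp => mod_cast (hP p hp).pos
  have hu : ∀ p ∈ P, 0 ≤ u p := fun p hp =>
    div_nonneg (hw p hp).1 (rpow_nonneg (hp_pos p hp).le σ₀)
  have hweight : ∀ p ∈ P, u p ≤ (p : ℝ) ^ (-σ₀) := fun p hp => by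
    rw [rpow_neg (hp_pos p hp).le, ← one_div]
    exact div_le_div_of_nonneg_right (hw p hp).2 (rpow_nonneg (hp_pos p hp).le σ₀)
  have hmass : ∑ p ∈ P, u p * ‖a p‖ ^ 2 = ∑ p ∈ P, ‖a p‖ ^ 2 * w p / (p : ℝ) ^ σ₀ :=
    sum_congr rfl fun p _ => by ring
  rw [← sum_sub_distrib]
  calc _ ≤ ∑ p ∈ P, 2 * π * (u p * ‖a p‖ * d p) := by
        refine (norm_sum_le _ _).trans (sum_le_sum fun p hp => ?_)
        have h := norm_mul_exp_div_sub_div_cpow_le (hp_pos p hp) (a p * w p) σ₀ t (θ p)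
        rw [Complex.ofReal_natCast, norm_mul, Complex.norm_real,
          Real.norm_of_nonneg (hw p hp).1] at h
        exact h.trans_eq (by ring)
    _ = 2 * π * ∑ p ∈ P, u p * ‖a p‖ * d p := (mul_sum _ _ _).symm
    _ ≤ 2 * π * (√(∑ p ∈ P, u p * ‖a p‖ ^ 2) * √(∑ p ∈ P, u p * d p ^ 2)) := by
        gcongr; exact Real.sum_mul_mul_le_sqrt_mul_sqrt P hu _ _
    _ ≤ _ := by
        rw [← mul_assoc, hmass]
        gcongr with p hp
        exact hweight p hp
end

section
/- Let P be a finite set, let k be a positive integer, let c_j : P → ℂ for j = 1, …, k, and let b_1, …, b_k ∈ ℂ. If there exists z : P → ℂ with |z_p| ≤ 1 for all p ∈ P such that ∑_{p ∈ P} c_j(p)·z_p = b_j for every j = 1, …, k, then there exists z′ : P → ℂ with |z′_p| ≤ 1 for all p ∈ P, ∑_{p ∈ P} c_j(p)·z′_p = b_j for every j = 1, …, k, and such that the strict inequality |z′_p| < 1 holds for at most k + 1 elements p of P. -/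
/-!
If more than `k` coordinates of a solution `z` lie strictly inside the disc, the columns of the
system at those coordinates are linearly dependent in `ℂᵏ`, so some nonzero `v` supported there
solves the homogeneous system. Along the real line `t ↦ z + t • v` the largest modulus of these
coordinates is continuous, `< 1` at `t = 0` and unbounded, so by the intermediate value theorem
some `t` makes it exactly `1`: the solution stays in the polydisc and one more coordinate reaches
the circle. Iterating leaves at most `k` interior coordinates.
-/

open Finset

theorem exists_ne_zero_sum_smul_eq_zero_of_finrank_lt_card {K M α : Type*} [Field K]
    [AddCommGroup M] [Module K M] [FiniteDimensional K M] (u : α → M) {S : Finset α}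
    (h : Module.finrank K M < #S) :
    ∃ v : α → K, (∀ p ∉ S, v p = 0) ∧ (∃ p ∈ S, v p ≠ 0) ∧ ∑ p ∈ S, v p • u p = 0 := by
  have hdep : ¬LinearIndepOn K u (S : Set α) := fun hind => by
    have := hind.fintype_card_le_finrank
    simp only [coe_sort_coe, Fintype.card_coe] at this
    omega
  obtain ⟨f, hf, p, hpS, hfp⟩ := not_linearIndepOn_finset_iff.mp hdep
  refine ⟨(S : Set α).indicator f, fun p hp => Set.indicator_of_notMem hp f,
    ⟨p, hpS, by rwa [Set.indicator_of_mem hpS]⟩, ?_⟩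
  rw [← hf]
  exact sum_congr rfl fun p hp => by rw [Set.indicator_of_mem hp]

theorem exists_forall_norm_add_smul_le_and_exists_eq {α E : Type*} [NormedAddCommGroup E]
    [NormedSpace ℝ E] {S : Finset α} {z v : α → E} {r : ℝ} (hz : ∀ p ∈ S, ‖z p‖ < r)
    (hv : ∃ p ∈ S, v p ≠ 0) :
    ∃ t : ℝ, (∀ p ∈ S, ‖z p + t • v p‖ ≤ r) ∧ ∃ q ∈ S, ‖z q + t • v q‖ = r := by
  obtain ⟨p₀, hp₀, hvp₀⟩ := hv
  have hS : S.Nonempty := ⟨p₀, hp₀⟩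
  set f : ℝ → ℝ := fun t => S.sup' hS fun p => ‖z p + t • v p‖
  have hf : Continuous f := Continuous.finset_sup'_apply hS fun p _ => by fun_prop
  have hf0 : f 0 ≤ r := by
    simpa [f, sup'_le_iff] using fun p hp => (hz p hp).le
  set T := (r + ‖z p₀‖) / ‖v p₀‖
  have hT : 0 ≤ T := div_nonneg (by linarith [norm_nonneg (z p₀), hz p₀ hp₀]) (norm_nonneg _)
  have hfT : r ≤ f T := by
    have hTv : T * ‖v p₀‖ = r + ‖z p₀‖ := div_mul_cancel₀ _ (norm_ne_zero_iff.mpr hvp₀)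
    calc r = ‖T • v p₀‖ - ‖z p₀‖ := by rw [norm_smul, Real.norm_of_nonneg hT, hTv]; ring
      _ ≤ ‖z p₀ + T • v p₀‖ := by
          have := norm_sub_le (z p₀ + T • v p₀) (z p₀)
          rw [add_sub_cancel_left] at this
          linarith
      _ ≤ f T := le_sup' (fun p => ‖z p + T • v p‖) hp₀
  obtain ⟨t, -, hft⟩ := intermediate_value_Icc hT hf.continuousOn ⟨hf0, hfT⟩
  obtain ⟨q, hq, hfq⟩ := exists_mem_eq_sup' hS fun p => ‖z p + t • v p‖
  exact ⟨t, fun p hp => hft ▸ le_sup' (fun p => ‖z p + t • v p‖) hp, q, hq, hfq ▸ hft⟩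

theorem exists_card_filter_norm_lt_lt_of_fintype_card_lt {ι α 𝕜 : Type*} [Fintype ι] [RCLike 𝕜]
    (P : Finset α) (c : ι → α → 𝕜) {z : α → 𝕜} (hz : ∀ p ∈ P, ‖z p‖ ≤ 1)
    (hcard : Fintype.card ι < #(P.filter fun p => ‖z p‖ < 1)) :
    ∃ z' : α → 𝕜, (∀ p ∈ P, ‖z' p‖ ≤ 1) ∧ (∀ j, ∑ p ∈ P, c j p * z' p = ∑ p ∈ P, c j p * z p) ∧
      #(P.filter fun p => ‖z' p‖ < 1) < #(P.filter fun p => ‖z p‖ < 1) := by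
  set S := P.filter fun p => ‖z p‖ < 1
  rw [← Module.finrank_fintype_fun_eq_card 𝕜] at hcard
  obtain ⟨v, hvS, hv, hker⟩ :=
    exists_ne_zero_sum_smul_eq_zero_of_finrank_lt_card (fun p j => c j p) hcard
  obtain ⟨t, ht, q, hqS, hq⟩ := exists_forall_norm_add_smul_le_and_exists_eq (r := 1)
    (fun p hp => (mem_filter.mp hp).2) hv
  have hz'S : ∀ p ∉ S, z p + t • v p = z p := fun p hp => by rw [hvS p hp, smul_zero, add_zero]
  refine ⟨fun p => z p + t • v p, fun p hp => ?_, fun j => ?_, card_lt_card ?_⟩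
  · by_cases hpS : p ∈ S
    · exact ht p hpS
    · simpa [hz'S p hpS] using hz p hp
  · have hPS : ∑ p ∈ P, c j p * v p = ∑ p ∈ S, v p * c j p := by
      rw [← sum_subset (filter_subset _ P) fun p _ hp => by rw [hvS p hp, mul_zero]]
      exact sum_congr rfl fun p _ => mul_comm _ _
    have : ∑ p ∈ S, v p * c j p = 0 := by simpa using congrFun hker j
    simp only [mul_add, mul_smul_comm, sum_add_distrib, ← smul_sum, hPS, this, smul_zero,
      add_zero]
  · refine (ssubset_iff_of_subset fun p hp => ?_).mpr ⟨q, hqS, fun hq' => ?_⟩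
    · by_contra hpS
      have hp' : p ∈ P ∧ ‖z p + t • v p‖ < 1 := mem_filter.mp hp
      rw [hz'S p hpS] at hp'
      exact hpS (mem_filter.mpr hp')
    · exact (mem_filter.mp hq').2.ne hq

theorem exists_card_filter_norm_lt_le_fintype_card {ι α 𝕜 : Type*} [Fintype ι] [RCLike 𝕜]
    (P : Finset α) (c : ι → α → 𝕜) {z : α → 𝕜} (hz : ∀ p ∈ P, ‖z p‖ ≤ 1) :
    ∃ z' : α → 𝕜, (∀ p ∈ P, ‖z' p‖ ≤ 1) ∧ (∀ j, ∑ p ∈ P, c j p * z' p = ∑ p ∈ P, c j p * z p) ∧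
      #(P.filter fun p => ‖z' p‖ < 1) ≤ Fintype.card ι := by
  induction hn : #(P.filter fun p => ‖z p‖ < 1) using Nat.strong_induction_on generalizing z
    with | _ n ih
  by_cases hcard : #(P.filter fun p => ‖z p‖ < 1) ≤ Fintype.card ι
  · exact ⟨z, hz, fun _ => rfl, hcard⟩
  obtain ⟨z₁, hz₁, hsum₁, hlt⟩ :=
    exists_card_filter_norm_lt_lt_of_fintype_card_lt P c hz (not_le.mp hcard)
  obtain ⟨z', hz', hsum', hcard'⟩ := ih _ (hn ▸ hlt) hz₁ rfl
  exact ⟨z', hz', fun j => (hsum' j).trans (hsum₁ j), hcard'⟩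

open scoped Classical in
theorem polydisc_solution_extreme_general {α : Type*} (P : Finset α) (k : ℕ)
    (c : Fin k → α → ℂ) (b : Fin k → ℂ)
    (h : ∃ z : α → ℂ, (∀ p ∈ P, ‖z p‖ ≤ 1) ∧ ∀ j, ∑ p ∈ P, c j p * z p = b j) :
    ∃ z' : α → ℂ, (∀ p ∈ P, ‖z' p‖ ≤ 1) ∧ (∀ j, ∑ p ∈ P, c j p * z' p = b j) ∧
      (P.filter (fun p => ‖z' p‖ < 1)).card ≤ k + 1 := by
  obtain ⟨z, hz, hsum⟩ := h
  obtain ⟨z', hz', hsum', hcard⟩ := exists_card_filter_norm_lt_le_fintype_card P c hz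
  refine ⟨z', hz', fun j => (hsum' j).trans (hsum j), ?_⟩
  rw [Fintype.card_fin] at hcard
  exact hcard.trans k.le_succ

open scoped Classical in
/-- Good's lemma: any solution of a linear system in the closed polydisc can be replaced
by one all but at most `k + 1` of whose coordinates lie on the unit circle. -/
theorem polydisc_solution_extreme {α : Type*} (P : Finset α) (k : ℕ) (hk : 0 < k)
    (c : Fin k → α → ℂ) (b : Fin k → ℂ)
    (h : ∃ z : α → ℂ, (∀ p ∈ P, ‖z p‖ ≤ 1) ∧ ∀ j, ∑ p ∈ P, c j p * z p = b j) :
    ∃ z' : α → ℂ, (∀ p ∈ P, ‖z' p‖ ≤ 1) ∧ (∀ j, ∑ p ∈ P, c j p * z' p = b j) ∧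
      (P.filter (fun p => ‖z' p‖ < 1)).card ≤ k + 1 :=
  polydisc_solution_extreme_general P k c b h
end
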